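/- arXiv:2506.12553 — 5 statements merged into one kernel-verified Lean document; each statement's English description precedes it below -/
import Mathlib

section
/- For any β ≥ 1, σ > 0, μ > 0, and α > 1, the Rényi divergence of order α between the generalized Gaussian distributions N_β(0,σ) and N_β(μ,σ) (with densities proportional to exp(-|x/σ|^β) and exp(-|(x-μ)/σ|^β) respectively) is finite. -/
/-!
After the substitution `y = x / σ` the integrand is a constant times
`exp ((α - 1) |y - μ/σ|^β - α |y|^β)`. For `β ≥ 1`, convexity of `t ↦ t^β` gives
`|y - c|^β ≤ θ^(1-β) |y|^β + (1-θ)^(1-β) |c|^β` for every `θ ∈ (0,1)`; taking `θ` close to `1`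
makes `(α - 1) θ^(1-β) < α`, so the exponent is at most `K - ε |y|^β` with `ε > 0`, and
`exp (-ε |y|^β)` is integrable.
-/

open MeasureTheory Real Set Filter Topology

theorem integrable_comp_abs_of_integrableOn_Ioi {E : Type*} [NormedAddCommGroup E] {f : ℝ → E}
    (hf : IntegrableOn f (Ioi 0)) : Integrable fun x ↦ f |x| := by
  have hIoi : IntegrableOn (fun x ↦ f |x|) (Ioi 0) :=
    hf.congr_fun (fun x hx ↦ by rw [abs_of_pos (mem_Ioi.mp hx)]) measurableSet_Ioi
  have hIic : IntegrableOn (fun x ↦ f |x|) (Iic 0) := by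
    have hneg : MeasurableEmbedding fun x : ℝ ↦ -x := (Homeomorph.neg ℝ).measurableEmbedding
    rw [← Measure.map_neg_eq_self (volume : Measure ℝ), hneg.integrableOn_map_iff]
    simp_rw [Function.comp_def, abs_neg, neg_preimage, neg_Iic, neg_zero]
    exact Iff.mpr integrableOn_Ici_iff_integrableOn_Ioi hIoi
  simpa [Iic_union_Ioi] using hIic.union hIoi

theorem integrable_exp_neg_mul_abs_rpow {p b : ℝ} (hp : 0 < p) (hb : 0 < b) :
    Integrable fun x : ℝ ↦ exp (-b * |x| ^ p) :=
  integrable_comp_abs_of_integrableOn_Ioi (f := fun x ↦ exp (-b * x ^ p)) <| by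
    simpa using integrableOn_rpow_mul_exp_neg_mul_rpow (s := 0) (by norm_num) hp hb

theorem add_rpow_le_rpow_mul_rpow_add_rpow_mul_rpow {p θ u v : ℝ} (hp : 1 ≤ p)
    (hθ : θ ∈ Ioo 0 1) (hu : 0 ≤ u) (hv : 0 ≤ v) :
    (u + v) ^ p ≤ θ ^ (1 - p) * u ^ p + (1 - θ) ^ (1 - p) * v ^ p := by
  obtain ⟨hθ0, hθ1⟩ := hθ
  have hθ1' : 0 < 1 - θ := sub_pos.mpr hθ1
  have hconv := (convexOn_rpow hp).2 (mem_Ici.mpr (div_nonneg hu hθ0.le))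
    (mem_Ici.mpr (div_nonneg hv hθ1'.le)) hθ0.le hθ1'.le (add_sub_cancel θ 1)
  simp only [smul_eq_mul] at hconv
  rw [mul_div_cancel₀ u hθ0.ne', mul_div_cancel₀ v hθ1'.ne', div_rpow hu hθ0.le,
    div_rpow hv hθ1'.le] at hconv
  refine hconv.trans_eq ?_
  rw [rpow_sub hθ0, rpow_sub hθ1', rpow_one, rpow_one]
  ring

theorem exists_mem_Ioo_mul_rpow_one_sub_lt {p a b : ℝ} (hab : a < b) :
    ∃ θ ∈ Ioo (0 : ℝ) 1, a * θ ^ (1 - p) < b := by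
  have hlim : Tendsto (fun θ : ℝ ↦ a * θ ^ (1 - p)) (𝓝[<] 1) (𝓝 a) := by
    have hcont : ContinuousAt (fun θ : ℝ ↦ a * θ ^ (1 - p)) 1 :=
      (continuousAt_id.rpow_const (Or.inl one_ne_zero)).const_mul a
    simpa using hcont.tendsto.mono_left nhdsWithin_le_nhds
  exact (Eventually.and (Ioo_mem_nhdsLT zero_lt_one) (hlim.eventually (gt_mem_nhds hab))).exists

theorem exists_mul_rpow_abs_sub_sub_le {p a b : ℝ} (hp : 1 ≤ p) (ha : 0 ≤ a) (hab : a < b)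
    (c : ℝ) : ∃ ε > 0, ∃ K, ∀ x : ℝ, a * |x - c| ^ p - b * |x| ^ p ≤ K - ε * |x| ^ p := by
  obtain ⟨θ, hθ, hθb⟩ := exists_mem_Ioo_mul_rpow_one_sub_lt (p := p) hab
  refine ⟨b - a * θ ^ (1 - p), sub_pos.mpr hθb, a * ((1 - θ) ^ (1 - p) * |c| ^ p), fun x ↦ ?_⟩
  have hsub : |x - c| ^ p ≤ θ ^ (1 - p) * |x| ^ p + (1 - θ) ^ (1 - p) * |c| ^ p :=
    (rpow_le_rpow (abs_nonneg _) (abs_sub _ _) (by linarith)).trans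
      (add_rpow_le_rpow_mul_rpow_add_rpow_mul_rpow hp hθ (abs_nonneg x) (abs_nonneg c))
  nlinarith [mul_le_mul_of_nonneg_left hsub ha]

theorem integrable_exp_mul_rpow_abs_sub_sub {p a b : ℝ} (hp : 1 ≤ p) (ha : 0 ≤ a) (hab : a < b)
    (c : ℝ) : Integrable fun x : ℝ ↦ exp (a * |x - c| ^ p - b * |x| ^ p) := by
  obtain ⟨ε, hε, K, hK⟩ := exists_mul_rpow_abs_sub_sub_le hp ha hab c
  have hp0 : 0 ≤ p := by linarith
  have hcont : Continuous fun x : ℝ ↦ exp (a * |x - c| ^ p - b * |x| ^ p) := by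
    fun_prop (disch := exact hp0)
  refine ((integrable_exp_neg_mul_abs_rpow (p := p) (by linarith) hε).const_mul (exp K)).mono'
    hcont.aestronglyMeasurable (ae_of_all _ fun x ↦ ?_)
  rw [norm_of_nonneg (exp_pos _).le, ← exp_add]
  exact exp_le_exp.mpr (by linarith [hK x])

theorem mul_exp_neg_rpow_div_mul_exp_neg_rpow_sub_one {C : ℝ} (hC : 0 < C) (s t α : ℝ) :
    (C * exp (-s)) ^ α / (C * exp (-t)) ^ (α - 1) = C * exp ((α - 1) * t - α * s) := by
  rw [mul_rpow hC.le (exp_pos _).le, mul_rpow hC.le (exp_pos _).le, ← exp_mul, ← exp_mul,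
    mul_div_mul_comm, ← rpow_sub hC, sub_sub_cancel, rpow_one, ← exp_sub]
  ring_nf

theorem stmt_0_general (β σ μ α : ℝ) (hβ : 1 ≤ β) (hσ : 0 < σ) (hα : 1 < α) :
    Integrable (fun x : ℝ =>
      ((1 / (2 * σ * Real.Gamma (1 + 1 / β))) * Real.exp (-(|x / σ| ^ β))) ^ α /
        ((1 / (2 * σ * Real.Gamma (1 + 1 / β))) * Real.exp (-(|(x - μ) / σ| ^ β))) ^ (α - 1)) := by
  have hC : 0 < 1 / (2 * σ * Gamma (1 + 1 / β)) := by
    have := Gamma_pos_of_pos (by positivity : 0 < 1 + 1 / β)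
    positivity
  have hg := integrable_exp_mul_rpow_abs_sub_sub hβ (by linarith) (sub_one_lt α) (μ / σ)
  refine ((hg.comp_div hσ.ne').const_mul (1 / (2 * σ * Gamma (1 + 1 / β)))).congr
    (ae_of_all _ fun x ↦ ?_)
  dsimp only
  rw [mul_exp_neg_rpow_div_mul_exp_neg_rpow_sub_one hC, sub_div]

/-- For any β ≥ 1, σ > 0, μ > 0, α > 1, the Rényi divergence integral
∫ p(x)^α / q(x)^(α-1) dx between the generalized Gaussian densities
p(x) = (1/Z) exp(-|x/σ|^β) and q(x) = (1/Z) exp(-|(x-μ)/σ|^β),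
with Z = 2σΓ(1+1/β), is finite (i.e. the integrand is integrable),
hence the Rényi divergence of order α is finite. -/
theorem stmt_0 (β σ μ α : ℝ) (hβ : 1 ≤ β) (hσ : 0 < σ) (hμ : 0 < μ) (hα : 1 < α) :
    Integrable (fun x : ℝ =>
      ((1 / (2 * σ * Real.Gamma (1 + 1 / β))) * Real.exp (-(|x / σ| ^ β))) ^ α /
        ((1 / (2 * σ * Real.Gamma (1 + 1 / β))) * Real.exp (-(|(x - μ) / σ| ^ β))) ^ (α - 1)) :=
  stmt_0_general β σ μ α hβ hσ hα
end

section
/- For β ≥ 1, σ > 0, μ > 0, α > 1, the function g₁(y) = -α(y/σ)^β + (α-1)((y+μ)/σ)^β takes finite values and the integral ∫₀^∞ exp(g₁(y)) dy is finite. -/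
open MeasureTheory Real Filter Topology Asymptotics Set

/-! Since `((x + m) / x) ^ β → 1`, the combination `-α x ^ β + (α - 1) (x + m) ^ β` behaves like
`-x ^ β` at infinity; for `β ≥ 1` it is therefore eventually at most
`-x / 2`, so the integrand decays exponentially and is integrable on `(0, ∞)`. -/

lemma tendsto_rpow_add_div_self_atTop (m β : ℝ) :
    Tendsto (fun x : ℝ => ((x + m) / x) ^ β) atTop (𝓝 1) := by
  have hbase : Tendsto (fun x : ℝ => 1 + m / x) atTop (𝓝 1) := by
    simpa using (tendsto_const_nhds (x := (1 : ℝ))).add (tendsto_const_nhds.div_atTop tendsto_id)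
  have hpow := hbase.rpow_const (p := β) (Or.inl one_ne_zero)
  rw [one_rpow] at hpow
  refine hpow.congr' ?_
  filter_upwards [eventually_ne_atTop 0] with x hx
  rw [add_div, div_self hx]

lemma eventually_neg_mul_rpow_add_sub_one_mul_rpow_le {c : ℝ} (hc : c < 1) (α m β : ℝ) :
    ∀ᶠ x in atTop, -α * x ^ β + (α - 1) * (x + m) ^ β ≤ -c * x ^ β := by
  have hlim : Tendsto (fun x => -α + (α - 1) * ((x + m) / x) ^ β) atTop (𝓝 (-1)) := by
    convert ((tendsto_rpow_add_div_self_atTop m β).const_mul (α - 1)).const_add (-α) using 2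
    ring
  filter_upwards [hlim.eventually (gt_mem_nhds (by linarith : (-1 : ℝ) < -c)),
    eventually_gt_atTop 0, eventually_ge_atTop (-m)] with x hbound hx hxm
  have hsplit : (x + m) ^ β = ((x + m) / x) ^ β * x ^ β := by
    rw [← mul_rpow (div_nonneg (by linarith) hx.le) hx.le, div_mul_cancel₀ _ hx.ne']
  calc -α * x ^ β + (α - 1) * (x + m) ^ β = (-α + (α - 1) * ((x + m) / x) ^ β) * x ^ β := by
        rw [hsplit]; ring
    _ ≤ -c * x ^ β := mul_le_mul_of_nonneg_right hbound.le (rpow_nonneg hx.le β)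

lemma eventually_neg_mul_rpow_add_sub_one_mul_rpow_le_neg_half (α m : ℝ) {β : ℝ} (hβ : 1 ≤ β) :
    ∀ᶠ x in atTop, -α * x ^ β + (α - 1) * (x + m) ^ β ≤ -(1 / 2) * x := by
  filter_upwards [eventually_neg_mul_rpow_add_sub_one_mul_rpow_le (c := 1 / 2) (by norm_num) α m β,
    eventually_ge_atTop 1] with x hx hx1
  linarith [self_le_rpow_of_one_le hx1 hβ]

theorem stmt_3_general (β σ μ α : ℝ) (hβ : 1 ≤ β) (hσ : 0 < σ) :
    IntegrableOn
      (fun y : ℝ => Real.exp (-α * (y / σ) ^ β + (α - 1) * ((y + μ) / σ) ^ β))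
      (Set.Ioi 0) := by
  have hcont : Continuous fun y : ℝ =>
      exp (-α * (y / σ) ^ β + (α - 1) * ((y + μ) / σ) ^ β) := by
    fun_prop (disch := positivity)
  refine integrable_of_isBigO_exp_neg (b := 1 / (2 * σ)) (by positivity) hcont.continuousOn
    (IsBigO.of_bound 1 ?_)
  filter_upwards [(tendsto_id.atTop_div_const hσ).eventually
    (eventually_neg_mul_rpow_add_sub_one_mul_rpow_le_neg_half α (μ / σ) hβ)] with y hy
  rw [norm_of_nonneg (exp_pos _).le, norm_of_nonneg (exp_pos _).le, one_mul, exp_le_exp, add_div]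
  calc _ ≤ -(1 / 2) * (y / σ) := hy
    _ = -(1 / (2 * σ)) * y := by field_simp

/-- For β ≥ 1, σ > 0, μ > 0, α > 1, the function
g₁(y) = -α(y/σ)^β + (α-1)((y+μ)/σ)^β takes finite (real) values and
∫₀^∞ exp(g₁(y)) dy is finite, i.e. exp ∘ g₁ is integrable on (0,∞). -/
theorem stmt_3 (β σ μ α : ℝ) (hβ : 1 ≤ β) (hσ : 0 < σ) (hμ : 0 < μ) (hα : 1 < α) :
    IntegrableOn
      (fun y : ℝ => Real.exp (-α * (y / σ) ^ β + (α - 1) * ((y + μ) / σ) ^ β))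
      (Set.Ioi 0) :=
  stmt_3_general β σ μ α hβ hσ
end

section
/- The integral ∫ exp(-α|x/σ|^β + (α-1)|(x-μ)/σ|^β) dx over the real line is finite for all β ≥ 1, σ > 0, μ > 0, α > 1. -/
/-!
With `u = |x/σ|` and `m = |μ/σ|` we have `|(x-μ)/σ| ≤ u + m`. Convexity of `t ↦ t ^ β` with
weights `w, 1 - w` gives `(u + m) ^ β ≤ w ^ (1-β) u ^ β + C`, and for `w` close to `1` the factor
`(α - 1) w ^ (1-β)` is still below `α`. Hence the exponent is at most `K - c u ^ β ≤ K + c - c u`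
for some `c > 0`, and the integrand is dominated by a multiple of `exp (-(c/σ) |x|)`.
-/

open MeasureTheory Set Filter Topology

lemma Real.integrable_exp_neg_mul_abs {b : ℝ} (hb : 0 < b) :
    Integrable fun x : ℝ => Real.exp (-b * |x|) := by
  rw [← integrableOn_univ, ← Iic_union_Ioi (a := (0 : ℝ))]
  refine IntegrableOn.union ?_ ?_
  · refine (integrableOn_exp_mul_Iic hb 0).congr_fun (fun x hx => ?_) measurableSet_Iic
    rw [abs_of_nonpos hx, neg_mul_neg]
  · refine (exp_neg_integrableOn_Ioi 0 hb).congr_fun (fun x hx => ?_) measurableSet_Ioi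
    rw [abs_of_pos hx]

lemma Real.add_rpow_le_weighted_rpow_add {p a b w : ℝ} (hp : 1 ≤ p) (ha : 0 ≤ a) (hb : 0 ≤ b)
    (hw₀ : 0 < w) (hw₁ : w < 1) :
    (a + b) ^ p ≤ w ^ (1 - p) * a ^ p + (1 - w) ^ (1 - p) * b ^ p := by
  have hw' : 0 < 1 - w := sub_pos.2 hw₁
  have weight : ∀ {s t : ℝ}, 0 < s → 0 ≤ t → s * (t / s) ^ p = s ^ (1 - p) * t ^ p := by
    intro s t hs ht
    rw [Real.div_rpow ht hs.le, Real.rpow_sub hs, Real.rpow_one]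
    field_simp
  have h := (convexOn_rpow hp).2 (mem_Ici.2 (div_nonneg ha hw₀.le))
    (mem_Ici.2 (div_nonneg hb hw'.le)) hw₀.le hw'.le (add_sub_cancel w 1)
  simp only [smul_eq_mul] at h
  rwa [mul_div_cancel₀ a hw₀.ne', mul_div_cancel₀ b hw'.ne', weight hw₀ ha, weight hw' hb] at h

lemma exists_mul_rpow_one_sub_lt {a b : ℝ} (hba : b < a) (p : ℝ) :
    ∃ w, 0 < w ∧ w < 1 ∧ b * w ^ (1 - p) < a := by
  have hlim : Tendsto (fun w : ℝ => b * w ^ (1 - p)) (𝓝[<] 1) (𝓝 b) := by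
    have := (Real.continuousAt_rpow_const 1 (1 - p) (Or.inl one_ne_zero)).tendsto.const_mul b
    rw [Real.one_rpow, mul_one] at this
    exact this.mono_left nhdsWithin_le_nhds
  have hpos : ∀ᶠ w in 𝓝[<] (1 : ℝ), 0 < w := nhdsWithin_le_nhds (Ioi_mem_nhds one_pos)
  exact (hpos.and (eventually_mem_nhdsWithin.and (hlim.eventually (gt_mem_nhds hba)))).exists

lemma exists_forall_neg_mul_rpow_add_mul_rpow_le {p a b m : ℝ} (hp : 1 ≤ p) (hba : b < a)
    (hb : 0 ≤ b) (hm : 0 ≤ m) :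
    ∃ c > 0, ∃ K, ∀ u v : ℝ, 0 ≤ u → 0 ≤ v → v ≤ u + m → -a * u ^ p + b * v ^ p ≤ K - c * u := by
  obtain ⟨w, hw₀, hw₁, hw⟩ := exists_mul_rpow_one_sub_lt hba p
  set c := a - b * w ^ (1 - p)
  refine ⟨c, sub_pos.2 hw, b * (1 - w) ^ (1 - p) * m ^ p + c, fun u v hu hv hvu => ?_⟩
  have hvp : v ^ p ≤ w ^ (1 - p) * u ^ p + (1 - w) ^ (1 - p) * m ^ p :=
    (Real.rpow_le_rpow hv hvu (by linarith)).trans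
      (Real.add_rpow_le_weighted_rpow_add hp hu hm hw₀ hw₁)
  have hup : u - 1 ≤ u ^ p := by
    rcases le_total u 1 with h | h
    · linarith [Real.rpow_nonneg hu p]
    · linarith [Real.self_le_rpow_of_one_le h hp]
  nlinarith [mul_le_mul_of_nonneg_left hvp hb, mul_le_mul_of_nonneg_left hup (sub_pos.2 hw).le]

theorem stmt_4_general (β σ μ α : ℝ) (hβ : 1 ≤ β) (hσ : 0 < σ) (hα : 1 < α) :
    Integrable (fun x : ℝ =>
      Real.exp (-α * |x / σ| ^ β + (α - 1) * |(x - μ) / σ| ^ β)) := by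
  obtain ⟨c, hc, K, hK⟩ := exists_forall_neg_mul_rpow_add_mul_rpow_le hβ (sub_one_lt α)
    (sub_nonneg.2 hα.le) (abs_nonneg (μ / σ))
  refine ((Real.integrable_exp_neg_mul_abs (div_pos hc hσ)).const_mul (Real.exp K)).mono'
    (by fun_prop) (ae_of_all _ fun x => ?_)
  have hshift : |(x - μ) / σ| ≤ |x / σ| + |μ / σ| := by rw [sub_div]; exact abs_sub _ _
  rw [Real.norm_eq_abs, Real.abs_exp, ← Real.exp_add, Real.exp_le_exp]
  calc _ ≤ K - c * |x / σ| := hK _ _ (abs_nonneg _) (abs_nonneg _) hshift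
    _ = K + -(c / σ) * |x| := by rw [abs_div, abs_of_pos hσ]; ring

/-- The integral ∫ exp(-α|x/σ|^β + (α-1)|(x-μ)/σ|^β) dx over ℝ is finite
for all β ≥ 1, σ > 0, μ > 0, α > 1. -/
theorem stmt_4 (β σ μ α : ℝ) (hβ : 1 ≤ β) (hσ : 0 < σ) (hμ : 0 < μ) (hα : 1 < α) :
    Integrable (fun x : ℝ =>
      Real.exp (-α * |x / σ| ^ β + (α - 1) * |(x - μ) / σ| ^ β)) :=
  stmt_4_general β σ μ α hβ hσ hα
end

section
/- Privacy of noisy argmax from privacy of one-dimensional noise addition: suppose the noise distribution Z on ℝ satisfies Pr[Z ≥ r] ≤ e^ε Pr[Z ≥ r+1] + δ for all r ∈ ℝ. Let c, c' ∈ ℝ^N be count vectors satisfying c'_j ≤ c_j ≤ c'_j + 1 for all j (monotonicity and Lipschitz). Then for each index i, with independent noise Y₁,...,Y_N ∼ Z, Pr[argmax_j(c_j + Y_j) = i] ≤ e^ε Pr[argmax_j(c'_j + Y_j) = i] + δ and Pr[argmax_j(c'_j + Y_j) = i] ≤ e^ε Pr[argmax_j(c_j + Y_j) = i] + δ. -/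
/-!
Condition on the noise of the other candidates: given `Y_j = w_j` for `j ≠ i`, candidate `i` wins
under the counts `c` exactly when `Y_i` lies in the open ray `⋂_{j ≠ i} (c_j - c_i + w_j, ∞)`.
Since `c' ≤ c ≤ c' + 1`, the differences `c_j - c_i` and `c'_j - c'_i` differ by at most `1`, so
the left endpoints of the rays for `c` and `c'` do too. The one-dimensional guarantee, extended
from closed to open rays, therefore bounds each conditional probability, and integrating over the
other coordinates, which are independent of `Y_i`, gives the claim.
-/

open MeasureTheory ProbabilityTheory Set
open scoped ENNReal

theorem measure_le_of_isOpen_of_isUpperSet {ρ : Measure ℝ} {a b : ℝ≥0∞}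
    (hρ : ∀ r, ρ (Ici r) ≤ a * ρ (Ici (r + 1)) + b) {U V : Set ℝ} (hU : IsOpen U)
    (hU' : IsUpperSet U) (hUV : ∀ r ∈ U, Ici (r + 1) ⊆ V) :
    ρ U ≤ a * ρ V + b := by
  have hcover : U = ⋃ q : {q : ℚ // (q : ℝ) ∈ U}, Ici (q : ℝ) := by
    ext x
    simp only [mem_iUnion, mem_Ici, Subtype.exists, exists_prop]
    constructor
    · intro hx
      obtain ⟨l, hlx, hl⟩ :=
        exists_Ioc_subset_of_mem_nhds (hU.mem_nhds hx) ⟨x - 1, by linarith⟩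
      obtain ⟨q, hlq, hqx⟩ := exists_rat_btwn hlx
      exact ⟨q, hl ⟨hlq, hqx.le⟩, hqx.le⟩
    · rintro ⟨q, hq, hqx⟩
      exact hU' hqx hq
  have hdir : Directed (· ⊆ ·) fun q : {q : ℚ // (q : ℝ) ∈ U} ↦ Ici (q : ℝ) :=
    Antitone.directed_le fun p q hpq ↦ Ici_subset_Ici.2 (by exact_mod_cast hpq)
  rw [show ρ U = ⨆ q : {q : ℚ // (q : ℝ) ∈ U}, ρ (Ici (q : ℝ)) by
    rw [← hdir.measure_iUnion, ← hcover]]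
  refine iSup_le fun q ↦ (hρ q).trans ?_
  gcongr
  exact hUV q q.2

theorem measure_mem_le_of_indepFun {Ω α β : Type*} [MeasurableSpace Ω] [MeasurableSpace α]
    [MeasurableSpace β] {μ : Measure Ω} [IsProbabilityMeasure μ] {X : Ω → α} {W : Ω → β}
    (hX : Measurable X) (hW : Measurable W) (hXW : IndepFun X W μ) {U V : β → Set α}
    (hU : MeasurableSet {p : α × β | p.1 ∈ U p.2})
    (hV : MeasurableSet {p : α × β | p.1 ∈ V p.2})
    {a b : ℝ≥0∞} (h : ∀ w, μ.map X (U w) ≤ a * μ.map X (V w) + b) :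
    μ {ω | X ω ∈ U (W ω)} ≤ a * μ {ω | X ω ∈ V (W ω)} + b := by
  have hsections : ∀ {S : β → Set α}, MeasurableSet {p : α × β | p.1 ∈ S p.2} →
      μ {ω | X ω ∈ S (W ω)} = ∫⁻ w, μ.map X (S w) ∂(μ.map W) := by
    intro S hS
    calc μ {ω | X ω ∈ S (W ω)} = μ.map (fun ω ↦ (X ω, W ω)) {p | p.1 ∈ S p.2} :=
          (Measure.map_apply (hX.prodMk hW) hS).symm
      _ = (μ.map X).prod (μ.map W) {p | p.1 ∈ S p.2} := by
          rw [hXW.map_prod_eq_prod_map_map hX.aemeasurable hW.aemeasurable]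
      _ = ∫⁻ w, μ.map X (S w) ∂(μ.map W) := Measure.prod_apply_symm hS
  have := Measure.isProbabilityMeasure_map (μ := μ) hW.aemeasurable
  have hVmeas : Measurable fun w ↦ μ.map X (V w) := measurable_measure_prodMk_right hV
  calc μ {ω | X ω ∈ U (W ω)} = ∫⁻ w, μ.map X (U w) ∂(μ.map W) := hsections hU
    _ ≤ ∫⁻ w, (a * μ.map X (V w) + b) ∂(μ.map W) := lintegral_mono h
    _ = a * μ {ω | X ω ∈ V (W ω)} + b := by
      rw [lintegral_add_right _ measurable_const, lintegral_const_mul _ hVmeas, hsections hV]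
      simp

theorem measure_strictArgmax_le {Ω ι : Type*} [MeasurableSpace Ω] {μ : Measure Ω}
    [IsProbabilityMeasure μ] [Fintype ι] {Y : ι → Ω → ℝ} (hY : ∀ j, Measurable (Y j))
    (hindep : iIndepFun Y μ) {i : ι} {a b : ℝ≥0∞}
    (hpriv : ∀ r, μ.map (Y i) (Ici r) ≤ a * μ.map (Y i) (Ici (r + 1)) + b) {d d' : ι → ℝ}
    (hd : ∀ j, d j - d i ≤ d' j - d' i + 1) :
    μ {ω | ∀ j, j ≠ i → d' j + Y j ω < d' i + Y i ω}
      ≤ a * μ {ω | ∀ j, j ≠ i → d j + Y j ω < d i + Y i ω} + b := by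
  classical
  set T := Finset.univ.erase i
  let W : Ω → T → ℝ := fun ω j ↦ Y j ω
  have hXW : IndepFun (Y i) W μ :=
    (hindep.indepFun_finset {i} T (by simp [T]) hY).comp
      (measurable_pi_apply (⟨i, Finset.mem_singleton_self i⟩ : ({i} : Finset ι))) measurable_id
  let ray (e : ι → ℝ) (w : T → ℝ) : Set ℝ := ⋂ j : T, Ioi (e j + w j - e i)
  have hevent : ∀ e : ι → ℝ,
      {ω | ∀ j, j ≠ i → e j + Y j ω < e i + Y i ω} = {ω | Y i ω ∈ ray e (W ω)} := by
    intro e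
    ext ω
    simp only [mem_ofPred_eq, ray, W, mem_iInter, mem_Ioi, Subtype.forall, T,
      Finset.mem_erase, Finset.mem_univ, and_true]
    exact forall₂_congr fun j _ ↦ by constructor <;> intro <;> linarith
  have hmeas : ∀ e, MeasurableSet {p : ℝ × (T → ℝ) | p.1 ∈ ray e p.2} := fun e ↦ by
    simp only [ray, mem_iInter, mem_Ioi, ofPred_forall]
    exact MeasurableSet.iInter fun j ↦ measurableSet_lt (by fun_prop) (by fun_prop)
  rw [hevent, hevent]
  refine measure_mem_le_of_indepFun (hY i) (measurable_pi_lambda W fun j ↦ hY j) hXW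
    (hmeas d') (hmeas d) fun w ↦ ?_
  refine measure_le_of_isOpen_of_isUpperSet hpriv
    (isOpen_iInter_of_finite fun _ ↦ isOpen_Ioi) (isUpperSet_iInter fun _ ↦ isUpperSet_Ioi _)
    fun r hr x hx ↦ ?_
  simp only [ray, mem_iInter, mem_Ioi, mem_Ici] at hr hx ⊢
  exact fun j ↦ by linarith [hr j, hd j]

theorem stmt_15_general (Ω : Type*) [MeasureSpace Ω] [IsProbabilityMeasure (ℙ : Measure Ω)]
    (N : ℕ) (ε δ : ℝ)
    (ρ : Measure ℝ)
    (hpriv : ∀ r : ℝ, ρ (Set.Ici r) ≤ ENNReal.ofReal (Real.exp ε) * ρ (Set.Ici (r + 1))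
        + ENNReal.ofReal δ)
    (Y : Fin N → Ω → ℝ) (hYmeas : ∀ j, Measurable (Y j))
    (hindep : iIndepFun Y ℙ)
    (hlaw : ∀ j, (ℙ : Measure Ω).map (Y j) = ρ)
    (c c' : Fin N → ℝ) (hmono : ∀ j, c' j ≤ c j) (hlip : ∀ j, c j ≤ c' j + 1)
    (i : Fin N) :
    (ℙ : Measure Ω) {ω | ∀ j, j ≠ i → c j + Y j ω < c i + Y i ω}
        ≤ ENNReal.ofReal (Real.exp ε) *
          (ℙ : Measure Ω) {ω | ∀ j, j ≠ i → c' j + Y j ω < c' i + Y i ω}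
        + ENNReal.ofReal δ ∧
    (ℙ : Measure Ω) {ω | ∀ j, j ≠ i → c' j + Y j ω < c' i + Y i ω}
        ≤ ENNReal.ofReal (Real.exp ε) *
          (ℙ : Measure Ω) {ω | ∀ j, j ≠ i → c j + Y j ω < c i + Y i ω}
        + ENNReal.ofReal δ := by
  rw [← hlaw i] at hpriv
  exact ⟨measure_strictArgmax_le hYmeas hindep hpriv fun j ↦ by linarith [hmono j, hlip i],
    measure_strictArgmax_le hYmeas hindep hpriv fun j ↦ by linarith [hlip j, hmono i]⟩

/-- Privacy of noisy argmax from privacy of one-dimensional noise addition: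
if the noise law ρ satisfies Pr[Z ≥ r] ≤ e^ε Pr[Z ≥ r+1] + δ for all r, and
c, c' are count vectors with c'_j ≤ c_j ≤ c'_j + 1, then with i.i.d. noise
Y₁,...,Y_N ∼ ρ, for each i the probability that i is the (strict, a.s. unique)
argmax of the noisy counts changes by at most an (e^ε, δ) factor between c and c'. -/
theorem stmt_15 (Ω : Type*) [MeasureSpace Ω] [IsProbabilityMeasure (ℙ : Measure Ω)]
    (N : ℕ) (hN : 0 < N) (ε δ : ℝ) (hδ : 0 ≤ δ)
    (ρ : Measure ℝ) [IsProbabilityMeasure ρ]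
    (hpriv : ∀ r : ℝ, ρ (Set.Ici r) ≤ ENNReal.ofReal (Real.exp ε) * ρ (Set.Ici (r + 1))
        + ENNReal.ofReal δ)
    (Y : Fin N → Ω → ℝ) (hYmeas : ∀ j, Measurable (Y j))
    (hindep : iIndepFun Y ℙ)
    (hlaw : ∀ j, (ℙ : Measure Ω).map (Y j) = ρ)
    (c c' : Fin N → ℝ) (hmono : ∀ j, c' j ≤ c j) (hlip : ∀ j, c j ≤ c' j + 1)
    (i : Fin N) :
    (ℙ : Measure Ω) {ω | ∀ j, j ≠ i → c j + Y j ω < c i + Y i ω}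
        ≤ ENNReal.ofReal (Real.exp ε) *
          (ℙ : Measure Ω) {ω | ∀ j, j ≠ i → c' j + Y j ω < c' i + Y i ω}
        + ENNReal.ofReal δ ∧
    (ℙ : Measure Ω) {ω | ∀ j, j ≠ i → c' j + Y j ω < c' i + Y i ω}
        ≤ ENNReal.ofReal (Real.exp ε) *
          (ℙ : Measure Ω) {ω | ∀ j, j ≠ i → c j + Y j ω < c i + Y i ω}
        + ENNReal.ofReal δ :=
  stmt_15_general Ω N ε δ ρ hpriv Y hYmeas hindep hlaw c c' hmono hlip i
end

section
/- For random variables Y and Ỹ with associated privacy curves δ_Y and δ_Ỹ defined by δ_Y(ε) = E[(1 - e^(ε - Y))₊], if there exists a coupling of Y and Ỹ with Pr[|Y - Ỹ| > c] ≤ η, then for every ε > 0: δ_Ỹ(ε + c) - η ≤ δ_Y(ε) ≤ δ_Ỹ(ε - c) + η. -/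
open MeasureTheory

private lemma F_cont (a : ℝ) : Continuous (fun y : ℝ => max (1 - Real.exp (a - y)) 0) :=
  (continuous_const.sub (Real.continuous_exp.comp (continuous_const.sub continuous_id))).max
    continuous_const

private lemma F_nonneg (a y : ℝ) : 0 ≤ max (1 - Real.exp (a - y)) 0 := le_max_right _ _

private lemma F_le_one (a y : ℝ) : max (1 - Real.exp (a - y)) 0 ≤ 1 := by
  have := Real.exp_pos (a - y)
  exact max_le (by linarith) one_pos.le

private lemma F_mono {a b y y' : ℝ} (h : a - y ≤ b - y') :
    max (1 - Real.exp (b - y')) 0 ≤ max (1 - Real.exp (a - y)) 0 :=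
  max_le_max (by have := Real.exp_le_exp.2 h; linarith) le_rfl

/-- Main transfer lemma: one side of the coupling inequality. -/
private lemma transfer (f g : ℝ × ℝ → ℝ) (c η : ℝ) (hη : 0 ≤ η)
    (π : Measure (ℝ × ℝ)) [IsProbabilityMeasure π]
    (hcpl : π {p : ℝ × ℝ | c < |p.1 - p.2|} ≤ ENNReal.ofReal η)
    (hf : Continuous f) (hg : Continuous g)
    (hf1 : ∀ p, f p ≤ 1) (hfb : ∀ p, ‖f p‖ ≤ 1) (hgb : ∀ p, ‖g p‖ ≤ 1)
    (hg0 : ∀ p, 0 ≤ g p)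
    (hab : ∀ p : ℝ × ℝ, |p.1 - p.2| ≤ c → f p ≤ g p) :
    ∫ p, f p ∂π ≤ (∫ p, g p ∂π) + η := by
  set B : Set (ℝ × ℝ) := {p : ℝ × ℝ | c < |p.1 - p.2|} with hB
  have hBmeas : MeasurableSet B := by
    apply measurableSet_lt measurable_const
    exact ((measurable_fst.sub measurable_snd).abs)
  have hint1 : Integrable f π :=
    (integrable_const (1 : ℝ)).mono' hf.aestronglyMeasurable
      (Filter.Eventually.of_forall hfb)
  have hint2 : Integrable g π :=
    (integrable_const (1 : ℝ)).mono' hg.aestronglyMeasurable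
      (Filter.Eventually.of_forall hgb)
  have hind : Integrable (B.indicator fun _ : ℝ × ℝ => (1 : ℝ)) π :=
    (integrable_const (1 : ℝ)).indicator hBmeas
  have hpt : ∀ p : ℝ × ℝ, f p ≤ g p + B.indicator (fun _ => (1 : ℝ)) p := by
    intro p
    by_cases hp : p ∈ B
    · rw [Set.indicator_of_mem hp]
      have := hf1 p; have := hg0 p; linarith
    · rw [Set.indicator_of_notMem hp]
      simp only [hB, Set.mem_setOf_eq, not_lt] at hp
      simpa using hab p hp
  calc ∫ p, f p ∂π
      ≤ ∫ p, (g p + B.indicator (fun _ => (1:ℝ)) p) ∂π :=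
        integral_mono hint1 (hint2.add hind) hpt
    _ = (∫ p, g p ∂π) + ∫ p, B.indicator (fun _ => (1:ℝ)) p ∂π := integral_add hint2 hind
    _ ≤ (∫ p, g p ∂π) + η := by
        gcongr
        rw [integral_indicator_const _ hBmeas, smul_eq_mul, mul_one]
        exact ENNReal.toReal_le_of_le_ofReal hη hcpl

/-- Coupling approximations transfer to privacy curves: if Y and Ỹ (privacy loss
random variables with laws μY, μY') admit a coupling π with Pr[|Y - Ỹ| > c] ≤ η,
then for every ε > 0, δ_Ỹ(ε + c) - η ≤ δ_Y(ε) ≤ δ_Ỹ(ε - c) + η, where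
δ_Y(ε) = E[(1 - e^(ε - Y))₊]. -/
theorem stmt_17 (μY μY' : Measure ℝ)
    [IsProbabilityMeasure μY] [IsProbabilityMeasure μY']
    (c η : ℝ) (hη : 0 ≤ η)
    (π : Measure (ℝ × ℝ)) [IsProbabilityMeasure π]
    (hfst : π.map Prod.fst = μY) (hsnd : π.map Prod.snd = μY')
    (hcpl : π {p : ℝ × ℝ | c < |p.1 - p.2|} ≤ ENNReal.ofReal η)
    (ε : ℝ) (hε : 0 < ε) :
    (∫ y, max (1 - Real.exp ((ε + c) - y)) 0 ∂μY') - η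
        ≤ ∫ y, max (1 - Real.exp (ε - y)) 0 ∂μY ∧
    (∫ y, max (1 - Real.exp (ε - y)) 0 ∂μY)
        ≤ (∫ y, max (1 - Real.exp ((ε - c) - y)) 0 ∂μY') + η := by
  have hmapY : ∀ a : ℝ, ∫ y, max (1 - Real.exp (a - y)) 0 ∂μY
      = ∫ p : ℝ × ℝ, max (1 - Real.exp (a - p.1)) 0 ∂π := by
    intro a
    rw [← hfst, integral_map measurable_fst.aemeasurable (F_cont a).aestronglyMeasurable]
  have hmapY' : ∀ a : ℝ, ∫ y, max (1 - Real.exp (a - y)) 0 ∂μY'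
      = ∫ p : ℝ × ℝ, max (1 - Real.exp (a - p.2)) 0 ∂π := by
    intro a
    rw [← hsnd, integral_map measurable_snd.aemeasurable (F_cont a).aestronglyMeasurable]
  have hnorm : ∀ (a y : ℝ), ‖max (1 - Real.exp (a - y)) 0‖ ≤ 1 := by
    intro a y
    rw [Real.norm_eq_abs, abs_of_nonneg (F_nonneg a y)]
    exact F_le_one a y
  constructor
  · rw [hmapY, hmapY', sub_le_iff_le_add]
    exact transfer (fun p => max (1 - Real.exp ((ε + c) - p.2)) 0)
      (fun p => max (1 - Real.exp (ε - p.1)) 0) c η hη π hcpl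
      ((F_cont _).comp continuous_snd) ((F_cont _).comp continuous_fst)
      (fun p => F_le_one _ _) (fun p => hnorm _ _) (fun p => hnorm _ _)
      (fun p => F_nonneg _ _)
      (fun p hp => F_mono (by have h := abs_le.1 hp; obtain ⟨h1, h2⟩ := h; linarith))
  · rw [hmapY, hmapY']
    exact transfer (fun p => max (1 - Real.exp (ε - p.1)) 0)
      (fun p => max (1 - Real.exp ((ε - c) - p.2)) 0) c η hη π hcpl
      ((F_cont _).comp continuous_fst) ((F_cont _).comp continuous_snd)
      (fun p => F_le_one _ _) (fun p => hnorm _ _) (fun p => hnorm _ _)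
      (fun p => F_nonneg _ _)
      (fun p hp => F_mono (by have h := abs_le.1 hp; obtain ⟨h1, h2⟩ := h; linarith))
end
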